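/- arXiv:1707.04160 — 5 statements merged into one kernel-verified Lean document; each statement's English description precedes it below -/
import Mathlib

section
/- Let S be a finite type, f : S → Bool → S, s₀ ∈ S and F ⊆ S, where the action of a word w : List Bool on a state s is s · w = List.foldl f s w. If for every state q ∈ S there is a word u with q · u ∈ F, then the set of sequences X : ℕ → Bool whose run never visits an accepting state (i.e., r n ∉ F for all n, where r 0 = s₀ and r (n+1) = f (r n) (X n)) has μ-measure zero. -/
open MeasureTheory Filter

/-- The fair-coin product probability measure on Cantor space `ℕ → Bool`,
constructed as the pushforward of Lebesgue measure on `[0,1)` under binary expansion. -/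
noncomputable def mu : Measure (ℕ → Bool) :=
  Measure.map (fun x n => decide (⌊x * 2 ^ (n + 1)⌋ % 2 = 1))
    (volume.restrict (Set.Ico (0 : ℝ) 1))

/-- Action of a word on a state of an automaton. -/
def act {S A : Type*} (f : S → A → S) (s : S) (w : List A) : S := w.foldl f s

/-- The run of a sequence `X` on the machine `(S, f, s₀)`. -/
def run {S : Type*} (f : S → Bool → S) (s₀ : S) (X : ℕ → Bool) : ℕ → S
  | 0 => s₀
  | n + 1 => f (run f s₀ X n) (X n)

/-- `t` is reachable from `s`. -/
def Reach {S : Type*} (f : S → Bool → S) (s t : S) : Prop := ∃ w : List Bool, act f s w = t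

/-- The connected component of a state `s`. -/
def component {S : Type*} (f : S → Bool → S) (s : S) : Set S :=
  {t | Reach f s t ∧ Reach f t s}

/-- `g` is a leaf connected component. -/
def IsLeafComponent {S : Type*} (f : S → Bool → S) (g : Set S) : Prop :=
  (∃ s, g = component f s) ∧ ∀ s ∈ g, ∀ t, Reach f s t → Reach f t s

/-- The word `w` occurs as a subword of the sequence `X`. -/
def Occurs (w : List Bool) (X : ℕ → Bool) : Prop :=
  ∃ n, ∀ k < w.length, X (n + k) = w.getD k false

/-- `X` is disjunctive: every word occurs in `X` as a subword. -/
def Disjunctive (X : ℕ → Bool) : Prop := ∀ w : List Bool, Occurs w X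

/-- The word `w` is a prefix of the sequence `X`. -/
def IsPrefixOfSeq (w : List Bool) (X : ℕ → Bool) : Prop :=
  ∀ k < w.length, X k = w.getD k false

/-- `[L]`: the set of sequences having some prefix in the language `L`. -/
def cyl (L : Set (List Bool)) : Set (ℕ → Bool) := {X | ∃ w ∈ L, IsPrefixOfSeq w X}

/-- `I(X)`: the set of states visited infinitely often by the run of `X`. -/
def InfOcc {S : Type*} (f : S → Bool → S) (s₀ : S) (X : ℕ → Bool) : Set S :=
  {s | ∃ᶠ n in atTop, run f s₀ X n = s}

/-- `X` is accepted by the deterministic Büchi automaton `(S, f, s₀, F)`. -/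
def BuchiAccepts {S : Type*} (f : S → Bool → S) (s₀ : S) (F : Set S) (X : ℕ → Bool) : Prop :=
  ∃ᶠ n in atTop, run f s₀ X n ∈ F

/-- A language is regular if it is accepted by a DFA with finitely many states. -/
def Regular {A : Type} (L : Set (List A)) : Prop :=
  ∃ (S : Type) (_ : Fintype S) (f : S → A → S) (s₀ : S) (F : Set S),
    L = {w | act f s₀ w ∈ F}

/-- The convolution of two words. -/
def conv (x i : List Bool) : List (Option Bool × Option Bool) :=
  (List.range (max x.length i.length)).map (fun k => (x[k]?, i[k]?))

/-- `(I, U)` is an automatic family. -/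
def IsAutomaticFamily (I : Set (List Bool)) (U : List Bool → Set (List Bool)) : Prop :=
  Regular I ∧ Regular {c | ∃ i ∈ I, ∃ x ∈ U i, c = conv x i}

/-- `(I, U)` is an automatic randomness test (ART). -/
def IsART (I : Set (List Bool)) (U : List Bool → Set (List Bool)) : Prop :=
  IsAutomaticFamily I U ∧ ∀ ε : ENNReal, 0 < ε → ∃ i ∈ I, mu (cyl (U i)) ≤ ε

/-- `(I, U)` is a Martin-Löf automatic randomness test (MART). -/
def IsMART (I : Set (List Bool)) (U : List Bool → Set (List Bool)) : Prop :=
  IsAutomaticFamily I U ∧ I.Infinite ∧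
    ∀ i ∈ I, mu (cyl (U i)) ≤ (2 : ENNReal) ^ (-(i.length : ℤ))

/-- The covering region `F(I, U)` of a test. -/
def coverRegion (I : Set (List Bool)) (U : List Bool → Set (List Bool)) : Set (ℕ → Bool) :=
  ⋂ i ∈ I, cyl (U i)

/-!
Choose for every state `q` an escape word `u q` with `q · u q ∈ F` and let `L` bound their
lengths. Whatever the first `m` letters of a sequence avoiding `F` are, continuing them by the
(padded) escape word of the state reached enters `F`; so among the `2^L` continuations of length
`L` at least one is forbidden. Hence at most `(2^L - 1)^k` words of length `kL` are prefixes of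
avoiding sequences. A cylinder of length `n` has measure `2^{-n}` (equal binary digits pin
`⌊x 2^n⌋`), so the avoiding set has measure at most `(1 - 2^{-L})^k` for every `k`.
-/

/-- The `(n+1)`-st binary digit of `x`, so that `mu` is `Measure.map binaryDigit` of Lebesgue
measure on `[0,1)`. -/
noncomputable def binaryDigit (x : ℝ) (n : ℕ) : Bool := decide (⌊x * 2 ^ (n + 1)⌋ % 2 = 1)

lemma measurable_binaryDigit : Measurable binaryDigit :=
  measurable_pi_lambda _ fun _ =>
    (measurable_from_top (f := fun z : ℤ => decide (z % 2 = 1))).comp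
      (measurable_id.mul_const _).floor

lemma floor_mul_two_pow_eq_of_binaryDigit_eq {x y : ℝ} (hx : x ∈ Set.Ico (0 : ℝ) 1)
    (hy : y ∈ Set.Ico (0 : ℝ) 1) {n : ℕ} (h : ∀ j < n, binaryDigit x j = binaryDigit y j) :
    ⌊x * 2 ^ n⌋ = ⌊y * 2 ^ n⌋ := by
  induction n with
  | zero =>
    simp [Int.floor_eq_zero_iff.2 hx, Int.floor_eq_zero_iff.2 hy]
  | succ n ih =>
    -- `⌊x 2^(n+1)⌋ = 2 ⌊x 2^n⌋ + (digit n of x)`, so equal digits propagate equal floors.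
    have halve : ∀ z : ℝ, ⌊z * 2 ^ (n + 1)⌋ / 2 = ⌊z * 2 ^ n⌋ := fun z => by
      simpa [pow_succ, mul_assoc] using
        Int.mul_natCast_floor_div_cancel (n := 2) two_ne_zero (z * 2 ^ n)
    have hx' := halve x
    have hy' := halve y
    have hlast := h n n.lt_succ_self
    simp only [binaryDigit, decide_eq_decide] at hlast
    rw [ih fun j hj => h j (hj.trans n.lt_succ_self)] at hx'
    omega

lemma volume_setOf_floor_mul_eq (N : ℤ) (c : ℝ) (hc : 0 < c) :
    volume {x : ℝ | ⌊x * c⌋ = N} = ENNReal.ofReal c⁻¹ := by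
  have : {x : ℝ | ⌊x * c⌋ = N} = (· * c) ⁻¹' Set.Ico (N : ℝ) (N + 1) := by
    ext x; simp [Int.floor_eq_iff]
  rw [this, Real.volume_preimage_mul_right hc.ne', Real.volume_Ico]
  simp [abs_of_pos hc]

lemma mu_cylinder_le {n : ℕ} (v : Fin n → Bool) :
    mu {X | ∀ i : Fin n, X i = v i} ≤ 2⁻¹ ^ n := by
  have hcyl : MeasurableSet {X : ℕ → Bool | ∀ i : Fin n, X i = v i} := by
    simp only [Set.ofPred_forall]
    exact MeasurableSet.iInter fun i => measurable_pi_apply _ (measurableSet_singleton _)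
  change Measure.map binaryDigit _ _ ≤ _
  rw [Measure.map_apply measurable_binaryDigit hcyl,
    Measure.restrict_apply (measurable_binaryDigit hcyl)]
  rcases Set.eq_empty_or_nonempty (binaryDigit ⁻¹' {X | ∀ i : Fin n, X i = v i} ∩ Set.Ico 0 1)
    with he | ⟨x₀, hx₀, hx₀I⟩
  · rw [he, measure_empty]; exact zero_le
  calc _ ≤ volume {x : ℝ | ⌊x * 2 ^ n⌋ = ⌊x₀ * 2 ^ n⌋} := by
        refine measure_mono fun x ⟨hx, hxI⟩ => ?_
        exact floor_mul_two_pow_eq_of_binaryDigit_eq hxI hx₀I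
          fun j hj => (hx ⟨j, hj⟩).trans (hx₀ ⟨j, hj⟩).symm
    _ = 2⁻¹ ^ n := by
        rw [volume_setOf_floor_mul_eq _ _ (by positivity), ← inv_pow,
          ENNReal.ofReal_pow (by norm_num), ENNReal.ofReal_inv_of_pos two_pos]
        norm_num

open Finset

open Classical in
noncomputable def prefixes (n : ℕ) (P : Set (ℕ → Bool)) : Finset (Fin n → Bool) :=
  {v | ∃ X ∈ P, ∀ i : Fin n, X i = v i}

lemma mem_prefixes {n : ℕ} {P : Set (ℕ → Bool)} {v : Fin n → Bool} :
    v ∈ prefixes n P ↔ ∃ X ∈ P, ∀ i : Fin n, X i = v i := by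
  simp [prefixes]

lemma mu_le_card_prefixes_mul (P : Set (ℕ → Bool)) (n : ℕ) :
    mu P ≤ #(prefixes n P) * 2⁻¹ ^ n :=
  calc mu P ≤ mu (⋃ v ∈ prefixes n P, {X | ∀ i : Fin n, X i = v i}) :=
        measure_mono fun X hX =>
          Set.mem_iUnion₂.2 ⟨fun i => X i, mem_prefixes.2 ⟨X, hX, fun _ => rfl⟩, fun _ => rfl⟩
    _ ≤ ∑ v ∈ prefixes n P, mu {X | ∀ i : Fin n, X i = v i} := measure_biUnion_finset_le _ _
    _ ≤ ∑ _v ∈ prefixes n P, 2⁻¹ ^ n := sum_le_sum fun v _ => mu_cylinder_le v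
    _ = #(prefixes n P) * 2⁻¹ ^ n := by rw [sum_const, nsmul_eq_mul]

lemma card_prefixes_add_le {P : Set (ℕ → Bool)} {m L : ℕ}
    (hblock : ∀ p ∈ prefixes m P, ∃ w : Fin L → Bool, Fin.append p w ∉ prefixes (m + L) P) :
    #(prefixes (m + L) P) ≤ (2 ^ L - 1) * #(prefixes m P) := by
  classical
  set init : (Fin (m + L) → Bool) → Fin m → Bool := fun v i => v (Fin.castAdd L i)
  set tail : (Fin (m + L) → Bool) → Fin L → Bool := fun v i => v (Fin.natAdd m i)
  have happend : ∀ v, Fin.append (init v) (tail v) = v := fun v => Fin.append_castAdd_natAdd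
  refine card_le_mul_card_image_of_maps_to (f := init) (fun v hv => ?_) _ fun p hp => ?_
  · obtain ⟨X, hX, hXv⟩ := mem_prefixes.1 hv
    exact mem_prefixes.2 ⟨X, hX, fun i => hXv (Fin.castAdd L i)⟩
  obtain ⟨w, hw⟩ := hblock p hp
  calc #{v ∈ prefixes (m + L) P | init v = p} ≤ #(univ.erase w) := by
        refine card_le_card_of_injOn tail (fun v hv => ?_) fun v₁ hv₁ v₂ hv₂ htail => ?_
        · simp only [coe_filter, Set.mem_ofPred_eq] at hv
          refine mem_erase.2 ⟨fun hvw => hw ?_, mem_univ _⟩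
          rw [← hv.2, ← hvw, happend]
          exact hv.1
        · simp only [coe_filter, Set.mem_ofPred_eq] at hv₁ hv₂
          rw [← happend v₁, ← happend v₂, hv₁.2, hv₂.2, htail]
    _ = 2 ^ L - 1 := by simp [card_univ]

def HasForbiddenExtensions (L : ℕ) (P : Set (ℕ → Bool)) : Prop :=
  ∀ m, ∀ p ∈ prefixes m P, ∃ w : Fin L → Bool, Fin.append p w ∉ prefixes (m + L) P

lemma card_prefixes_mul_le {P : Set (ℕ → Bool)} {L : ℕ}
    (hblock : HasForbiddenExtensions L P) (k : ℕ) : #(prefixes (k * L) P) ≤ (2 ^ L - 1) ^ k := by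
  induction k with
  | zero => simpa using card_le_univ (prefixes (0 * L) P)
  | succ k ih =>
    calc #(prefixes ((k + 1) * L) P) ≤ (2 ^ L - 1) * #(prefixes (k * L) P) := by
          rw [Nat.succ_mul]; exact card_prefixes_add_le (hblock _)
      _ ≤ (2 ^ L - 1) ^ (k + 1) := by rw [pow_succ']; gcongr

lemma mu_eq_zero_of_hasForbiddenExtensions {P : Set (ℕ → Bool)} {L : ℕ}
    (hblock : HasForbiddenExtensions L P) : mu P = 0 := by
  set r : ENNReal := ((2 ^ L - 1 : ℕ) : ENNReal) * 2⁻¹ ^ L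
  have hle : ∀ k, mu P ≤ r ^ k := fun k =>
    calc mu P ≤ #(prefixes (k * L) P) * 2⁻¹ ^ (k * L) := mu_le_card_prefixes_mul P _
      _ ≤ ((2 ^ L - 1 : ℕ) : ENNReal) ^ k * 2⁻¹ ^ (k * L) := by
          gcongr; exact_mod_cast card_prefixes_mul_le hblock k
      _ = r ^ k := by rw [mul_pow, mul_comm k L, pow_mul]
  have hr : r < 1 := by
    refine ENNReal.mul_lt_of_lt_div ?_
    rw [one_div, ← ENNReal.inv_pow, inv_inv]
    exact_mod_cast Nat.sub_lt (Nat.two_pow_pos L) one_pos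
  exact le_antisymm (ge_of_tendsto' (ENNReal.tendsto_pow_atTop_nhds_zero_of_lt_one hr) hle)
    zero_le

section Automaton

variable {S : Type*} (f : S → Bool → S) (s₀ : S)

lemma run_congr {X Y : ℕ → Bool} {m : ℕ} (h : ∀ i < m, X i = Y i) :
    run f s₀ X m = run f s₀ Y m := by
  induction m with
  | zero => rfl
  | succ m ih =>
    simp only [run, ih fun i hi => h i (hi.trans m.lt_succ_self), h m m.lt_succ_self]

lemma run_add (X : ℕ → Bool) (m k : ℕ) :
    run f s₀ X (m + k) = act f (run f s₀ X m) (List.ofFn fun i : Fin k => X (m + i)) := by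
  induction k with
  | zero => rfl
  | succ k ih =>
    rw [List.ofFn_succ', List.concat_eq_append, act, List.foldl_append]
    exact congrArg (f · (X (m + k))) ih

lemma hasForbiddenExtensions_avoiding {F : Set S} {u : S → List Bool}
    (hu : ∀ q, act f q (u q) ∈ F) {L : ℕ} (hL : ∀ q, (u q).length ≤ L) :
    HasForbiddenExtensions L {X | ∀ n, run f s₀ X n ∉ F} := by
  intro m p hp
  obtain ⟨X, -, hXp⟩ := mem_prefixes.1 hp
  set q := run f s₀ X m
  refine ⟨fun i => (u q).getD i false, fun hmem => ?_⟩
  obtain ⟨Y, hY, hYp⟩ := mem_prefixes.1 hmem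
  have hYm : run f s₀ Y m = q := run_congr f s₀ fun i hi => by
    have hYi := hYp (Fin.castAdd L ⟨i, hi⟩)
    rw [Fin.append_left] at hYi
    exact hYi.trans (hXp ⟨i, hi⟩).symm
  have hword : (List.ofFn fun i : Fin (u q).length => Y (m + i)) = u q := by
    refine List.ext_getElem (by simp) fun i hi _ => ?_
    rw [List.length_ofFn] at hi
    have hiL : i < L := hi.trans_le (hL q)
    have hYi := hYp (Fin.natAdd m ⟨i, hiL⟩)
    rw [Fin.append_right, List.getD_eq_getElem _ _ hi] at hYi
    simpa using hYi
  exact hY (m + (u q).length) (by rw [run_add, hYm, hword]; exact hu q)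

end Automaton

/-- If from every state an accepting state is reachable, then the set of
sequences whose run never visits an accepting state has `mu`-measure zero. -/
theorem stmt0 {S : Type} [Fintype S] (f : S → Bool → S) (s₀ : S) (F : Set S)
    (h : ∀ q : S, ∃ u : List Bool, act f q u ∈ F) :
    mu {X : ℕ → Bool | ∀ n : ℕ, run f s₀ X n ∉ F} = 0 := by
  choose u hu using h
  have hL : ∀ q, (u q).length ≤ univ.sup fun q => (u q).length := fun q =>
    le_sup (f := fun q => (u q).length) (mem_univ q)
  exact mu_eq_zero_of_hasForbiddenExtensions (hasForbiddenExtensions_avoiding f s₀ hu hL)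
end

section
/- Let S be a finite type, f : S → Bool → S and F ⊆ S, with the action of a word w on a state s given by s · w = List.foldl f s w. If for every state q ∈ S there is a word u with q · u ∈ F, then there exists a single word w such that for every state q ∈ S there is a prefix u of w with q · u ∈ F (i.e., processing w from any state visits an accepting state at least once). -/
open MeasureTheory Filter

/-- There is a single word `w` such that processing `w` from any state
visits an accepting state at least once. -/
theorem stmt1 {S : Type} [Fintype S] (f : S → Bool → S) (F : Set S)
    (h : ∀ q : S, ∃ u : List Bool, act f q u ∈ F) :
    ∃ w : List Bool, ∀ q : S, ∃ u : List Bool, u <+: w ∧ act f q u ∈ F := by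
  classical
  suffices h' : ∀ s : Finset S, ∃ w : List Bool, ∀ q ∈ s, ∃ u, u <+: w ∧ act f q u ∈ F by
    obtain ⟨w, hw⟩ := h' Finset.univ
    exact ⟨w, fun q => hw q (Finset.mem_univ q)⟩
  intro s
  induction s using Finset.induction with
  | empty => exact ⟨[], fun q hq => absurd hq (Finset.notMem_empty q)⟩
  | @insert a s ha ih =>
    obtain ⟨w, hw⟩ := ih
    obtain ⟨u, hu⟩ := h (act f a w)
    refine ⟨w ++ u, fun q' hq' => ?_⟩
    rcases Finset.mem_insert.mp hq' with rfl | hmem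
    · exact ⟨w ++ u, List.prefix_refl _, by simpa [act, List.foldl_append] using hu⟩
    · obtain ⟨u', hpre, hmem'⟩ := hw q' hmem
      exact ⟨u', hpre.trans (List.prefix_append w u), hmem'⟩
end

section
/- Let (S, f, s₀) be an FSM over Bool. For every disjunctive sequence X : ℕ → Bool, the run of X reaches a leaf connected component: there exist n ∈ ℕ and a leaf connected component g ⊆ S with r n ∈ g, where r is the run of X. -/
open MeasureTheory Filter

lemma act_append {S : Type*} (f : S → Bool → S) (s : S) (u v : List Bool) :
    act f s (u ++ v) = act f (act f s u) v := by simp [act, List.foldl_append]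

lemma Reach.refl {S : Type*} (f : S → Bool → S) (s : S) : Reach f s s := ⟨[], rfl⟩

lemma Reach.trans {S : Type*} {f : S → Bool → S} {s t u : S}
    (h1 : Reach f s t) (h2 : Reach f t u) : Reach f s u := by
  obtain ⟨w1, rfl⟩ := h1; obtain ⟨w2, rfl⟩ := h2
  exact ⟨w1 ++ w2, act_append f s w1 w2⟩

def IsLeafState {S : Type*} (f : S → Bool → S) (s : S) : Prop :=
  ∀ t, Reach f s t → Reach f t s

lemma IsLeafState.of_reach {S : Type*} {f : S → Bool → S} {s t : S}
    (hs : IsLeafState f s) (h : Reach f s t) : IsLeafState f t := by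
  intro u hu
  exact (hs u (h.trans hu)).trans h

lemma exists_leaf_reach {S : Type} [Fintype S] (f : S → Bool → S) (s : S) :
    ∃ t, Reach f s t ∧ IsLeafState f t := by
  classical
  obtain ⟨t, hts, hmin⟩ := Finset.exists_min_image
      (Finset.univ.filter (fun t => Reach f s t))
      (fun t => ({u | Reach f t u}.toFinset).card)
      ⟨s, by simp [Reach.refl]⟩
  simp only [Finset.mem_filter, Finset.mem_univ, true_and] at hts
  refine ⟨t, hts, ?_⟩
  intro u htu
  have hsub : {v | Reach f u v}.toFinset ⊆ {v | Reach f t v}.toFinset := by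
    intro v hv
    simp only [Set.mem_toFinset, Set.mem_setOf_eq] at *
    exact htu.trans hv
  have hsu : u ∈ Finset.univ.filter (fun t => Reach f s t) := by
    simp [hts.trans htu]
  have hle := hmin u hsu
  have hcard : {v | Reach f u v}.toFinset.card ≤ {v | Reach f t v}.toFinset.card :=
    Finset.card_le_card hsub
  have heq := Finset.eq_of_subset_of_card_le hsub (le_trans hle (le_refl _))
  have : t ∈ {v | Reach f u v}.toFinset := by
    rw [heq]; simp [Reach.refl]
  simpa using this

lemma exists_word_leaf_all {S : Type} [Fintype S] (f : S → Bool → S) (l : List S) :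
    ∃ w : List Bool, ∀ s ∈ l, IsLeafState f (act f s w) := by
  induction l with
  | nil => exact ⟨[], by simp⟩
  | cons s l ih =>
    obtain ⟨w, hw⟩ := ih
    obtain ⟨t, ⟨u, hu⟩, hleaf⟩ := exists_leaf_reach f (act f s w)
    refine ⟨w ++ u, ?_⟩
    intro s' hs'
    rcases List.mem_cons.mp hs' with rfl | h
    · rw [act_append, hu]; exact hleaf
    · rw [act_append]
      exact (hw s' h).of_reach ⟨u, rfl⟩

lemma run_occurs {S : Type*} (f : S → Bool → S) (s₀ : S) (X : ℕ → Bool) :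
    ∀ (w : List Bool) (n : ℕ), (∀ k < w.length, X (n + k) = w.getD k false) →
      run f s₀ X (n + w.length) = act f (run f s₀ X n) w := by
  intro w
  induction w with
  | nil => intro n _; simp [act]
  | cons a t ih =>
    intro n h
    have h0 : X n = a := by simpa using h 0 (by simp)
    have h' : ∀ k < t.length, X (n + 1 + k) = t.getD k false := by
      intro k hk
      have := h (k + 1) (by simpa using Nat.succ_lt_succ hk)
      simpa [Nat.add_comm, Nat.add_left_comm, Nat.add_assoc] using this
    have := ih (n + 1) h'
    have hrun : run f s₀ X (n + 1) = f (run f s₀ X n) a := by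
      simp [run, h0]
    calc run f s₀ X (n + (a :: t).length) = run f s₀ X (n + 1 + t.length) := by
          congr 1; simp; omega
      _ = act f (run f s₀ X (n+1)) t := this
      _ = act f (run f s₀ X n) (a :: t) := by rw [hrun]; rfl

/-- The run of any disjunctive sequence reaches a leaf connected component. -/
theorem stmt2 {S : Type} [Fintype S] (f : S → Bool → S) (s₀ : S)
    (X : ℕ → Bool) (hX : Disjunctive X) :
    ∃ (n : ℕ) (g : Set S), IsLeafComponent f g ∧ run f s₀ X n ∈ g := by
  classical
  obtain ⟨w, hw⟩ := exists_word_leaf_all f (Finset.univ.toList (α := S))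
  obtain ⟨n, hn⟩ := hX w
  have hrun := run_occurs f s₀ X w n hn
  set c := act f (run f s₀ X n) w with hc
  have hcleaf : IsLeafState f c := hw _ (by simp)
  refine ⟨n + w.length, component f c, ⟨⟨c, rfl⟩, ?_⟩, ?_⟩
  · rintro s ⟨hcs, hsc⟩ t hst
    exact (hcleaf.of_reach hcs) t hst
  · rw [hrun]
    exact ⟨Reach.refl f c, Reach.refl f c⟩
end

section
/- For a sequence X : ℕ → Bool, the following are equivalent: (1) there exists a deterministic Muller automaton M over Bool (on some finite state type) with μ(L(M)) = 0 and X ∈ L(M); (2) X is not disjunctive. -/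
/-!
If `X` is disjunctive, the set `C = I(X)` of states its run visits infinitely often is strongly
connected and closed under transitions (otherwise some word would lead every state of `C` out of
`C`, and it occurs in `X` late enough). A sequence that agrees with `X` until its run enters `C`
then stays in `C`, and almost surely visits every state of `C` infinitely often, so a cylinder of
positive measure lies in `L(M)` up to a null set.

If a word `w` does not occur in `X`, consider the machine remembering the last `|w|` letters: from
every state, reading `w` leads out of `I(X)`. Almost no sequence keeps its run in a set of states
that every state of it can leave by some word, so the Muller automaton accepting exactly `I(X)`
has a null language containing `X`.

Both null sets are bounded by counting: a sequence in them must, in each of many consecutive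
blocks of `L` letters, avoid one word prescribed by the letters before the block, which leaves at
most `(1 - 2⁻ᴸ) ^ J` of the measure after `J` blocks.
-/

open MeasureTheory Filter

namespace Muller

open scoped ENNReal

section Words

def seg (X : ℕ → Bool) (n k : ℕ) : List Bool := List.ofFn fun i : Fin k => X (n + i)

variable (X : ℕ → Bool)

@[simp]
lemma length_seg (n k : ℕ) : (seg X n k).length = k := List.length_ofFn

lemma seg_add (n k l : ℕ) : seg X n (k + l) = seg X n k ++ seg X (n + k) l := by
  simp [seg, List.ofFn_add, add_assoc]

lemma seg_eq_seg_iff {Y : ℕ → Bool} {n k : ℕ} :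
    seg X n k = seg Y n k ↔ ∀ i < k, X (n + i) = Y (n + i) := by
  simp [seg, List.ofFn_inj, funext_iff, Fin.forall_iff]

lemma seg_eq_of_prefix {w : List Bool} {n k : ℕ} (h : w <+: seg X n k) :
    seg X n w.length = w := by
  have hle : w.length ≤ k := by simpa using h.length_le
  have hseg : seg X n w.length <+: seg X n k := by
    rw [← Nat.add_sub_cancel' hle, seg_add]
    exact List.prefix_append _ _
  exact ((List.prefix_of_prefix_length_le h hseg (by simp)).eq_of_length (by simp)).symm

lemma occurs_iff_exists_seg_eq (w : List Bool) : Occurs w X ↔ ∃ n, seg X n w.length = w := by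
  refine exists_congr fun n => ⟨fun h => ?_, fun h k hk => ?_⟩
  · refine List.ext_getElem (by simp) fun k _ hk => ?_
    simp [seg, h k hk, List.getElem?_eq_getElem hk]
  · rw [List.getD_eq_getElem _ _ hk, ← List.getElem_of_eq h (by simpa using hk)]
    simp [seg]

lemma exists_seg_eq_of_disjunctive (hX : Disjunctive X) (w : List Bool) (N : ℕ) :
    ∃ n ≥ N, seg X n w.length = w := by
  obtain ⟨n, hn⟩ := (occurs_iff_exists_seg_eq X _).1 (hX (List.replicate N false ++ w))
  rw [List.length_append, List.length_replicate, seg_add] at hn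
  exact ⟨n + N, by omega, (List.append_inj hn (by simp)).2⟩

end Words

section Runs

variable {S : Type*} (f : S → Bool → S) (s₀ : S) (X : ℕ → Bool)

lemma act_append (s : S) (u v : List Bool) : act f s (u ++ v) = act f (act f s u) v :=
  List.foldl_append

lemma run_add (n k : ℕ) : run f s₀ X (n + k) = act f (run f s₀ X n) (seg X n k) := by
  induction k with
  | zero => rfl
  | succ k ih =>
    rw [seg_add, act_append, ← ih]
    simp [seg, act, run]

lemma run_eq_act_seg (n : ℕ) : run f s₀ X n = act f s₀ (seg X 0 n) := by
  simpa [run] using run_add f s₀ X 0 n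

lemma run_mem_of_le {C : Set S} (hC : ∀ s ∈ C, ∀ b, f s b ∈ C) {n₁ : ℕ}
    (h : run f s₀ X n₁ ∈ C) {n : ℕ} (hn : n₁ ≤ n) : run f s₀ X n ∈ C := by
  induction n, hn using Nat.le_induction with
  | base => exact h
  | succ n _ ih => exact hC _ ih (X n)

lemma eventually_mem_infOcc [Finite S] : ∀ᶠ n in atTop, run f s₀ X n ∈ InfOcc f s₀ X := by
  have h : ∀ s : {s // s ∉ InfOcc f s₀ X}, ∀ᶠ n in atTop, run f s₀ X n ≠ s :=
    fun s => not_frequently.1 s.2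
  filter_upwards [eventually_all.2 h] with n hn
  by_contra hnot
  exact hn ⟨_, hnot⟩ rfl

lemma infOcc_subset_of_eventually {C : Set S} (h : ∀ᶠ n in atTop, run f s₀ X n ∈ C) :
    InfOcc f s₀ X ⊆ C := fun s hs => by
  obtain ⟨n, hrun, hmem⟩ := (hs.and_eventually h).exists
  exact hrun ▸ hmem

lemma reach_of_mem_infOcc {s t : S} (hs : s ∈ InfOcc f s₀ X) (ht : t ∈ InfOcc f s₀ X) :
    Reach f s t := by
  obtain ⟨n₁, -, rfl⟩ := frequently_atTop.1 hs 0
  obtain ⟨n₂, hn₂, rfl⟩ := frequently_atTop.1 ht n₁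
  exact ⟨seg X n₁ (n₂ - n₁), by rw [← run_add, Nat.add_sub_cancel' hn₂]⟩

lemma exists_word_escaping [Finite S] {C : Set S} (hC : ∀ u ∈ C, ∃ y, act f u y ∉ C) :
    ∃ z : List Bool, ∀ u ∈ C, ∃ z', z' <+: z ∧ act f u z' ∉ C := by
  let T (z : List Bool) : Set S := {u ∈ C | ∀ z', z' <+: z → act f u z' ∈ C}
  let z := Function.argmin fun z => (T z).ncard
  refine ⟨z, fun u hu => ?_⟩
  by_contra! hstay
  obtain ⟨y, hy⟩ := hC _ (hstay z List.prefix_rfl)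
  have hsub : T (z ++ y) ⊆ T z := fun u' hu' =>
    ⟨hu'.1, fun z' hz' => hu'.2 z' (hz'.trans (List.prefix_append z y))⟩
  have hlt : T (z ++ y) ⊂ T z := (Set.ssubset_iff_of_subset hsub).2
    ⟨u, ⟨hu, hstay⟩, fun h => hy (by simpa [act_append] using h.2 _ List.prefix_rfl)⟩
  exact (Set.ncard_lt_ncard hlt).not_ge (Function.argmin_le (fun z => (T z).ncard) (z ++ y))

theorem infOcc_closed_of_disjunctive [Finite S] (hX : Disjunctive X) :
    ∀ s ∈ InfOcc f s₀ X, ∀ b, f s b ∈ InfOcc f s₀ X := by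
  by_contra! ⟨s, hs, b, hb⟩
  have hesc : ∀ u ∈ InfOcc f s₀ X, ∃ y, act f u y ∉ InfOcc f s₀ X := fun u hu => by
    obtain ⟨y, hy⟩ := reach_of_mem_infOcc f s₀ X hu hs
    exact ⟨y ++ [b], by rw [act_append, hy]; exact hb⟩
  obtain ⟨z, hz⟩ := exists_word_escaping f hesc
  obtain ⟨N, hN⟩ := eventually_atTop.1 (eventually_mem_infOcc f s₀ X)
  obtain ⟨n, hn, hseg⟩ := exists_seg_eq_of_disjunctive X hX z N
  obtain ⟨z', hz', hout⟩ := hz _ (hN n hn)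
  have hz'X : seg X n z'.length = z' := seg_eq_of_prefix X (k := z.length) (by rwa [hseg])
  rw [← hz'X, ← run_add] at hout
  exact hout (hN _ (by omega))

end Runs

section Cylinders

noncomputable def binaryDigits (x : ℝ) (n : ℕ) : Bool := decide (⌊x * 2 ^ (n + 1)⌋ % 2 = 1)

lemma mu_eq_map : mu = (volume.restrict (Set.Ico (0 : ℝ) 1)).map binaryDigits := rfl

lemma measurable_binaryDigits : Measurable binaryDigits := by
  refine measurable_pi_lambda _ fun n => ?_
  exact (measurable_from_top (f := fun m : ℤ => decide (m % 2 = 1))).comp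
    (Int.measurable_floor.comp (measurable_id.mul_const _))

instance : IsProbabilityMeasure mu := by
  have : IsProbabilityMeasure (volume.restrict (Set.Ico (0 : ℝ) 1)) := ⟨by simp⟩
  rw [mu_eq_map]
  exact Measure.isProbabilityMeasure_map measurable_binaryDigits.aemeasurable

lemma floor_mul_two_pow_eq {x y : ℝ} (hx : x ∈ Set.Ico 0 1) (hy : y ∈ Set.Ico 0 1) :
    ∀ n, (∀ i < n, binaryDigits x i = binaryDigits y i) → ⌊x * 2 ^ n⌋ = ⌊y * 2 ^ n⌋
  | 0, _ => by simp [Int.floor_eq_zero_iff.2 hx, Int.floor_eq_zero_iff.2 hy]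
  | n + 1, h => by
    have half (z : ℝ) : ⌊z * 2 ^ (n + 1)⌋ / 2 = ⌊z * 2 ^ n⌋ := by
      have := Int.floor_div_natCast (z * 2 ^ (n + 1)) 2
      rw [show z * 2 ^ (n + 1) / ((2 : ℕ) : ℝ) = z * 2 ^ n by push_cast; ring] at this
      exact_mod_cast this.symm
    have hhigh := floor_mul_two_pow_eq hx hy n fun i hi => h i (by omega)
    have hlow := h n (by omega)
    simp only [binaryDigits, decide_eq_decide] at hlow
    rw [← half, ← half] at hhigh
    omega

def cylinder (v : List Bool) : Set (ℕ → Bool) := {Y | seg Y 0 v.length = v}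

lemma measurableSet_cylinder (v : List Bool) : MeasurableSet (cylinder v) := by
  have hmeas : Measurable fun Y : ℕ → Bool => fun i : Fin v.length => Y (0 + i) :=
    measurable_pi_lambda _ fun _ => measurable_pi_apply _
  exact hmeas (MeasurableSet.of_discrete (s := {σ | List.ofFn σ = v}))

lemma mu_cylinder_le (v : List Bool) : mu (cylinder v) ≤ 2⁻¹ ^ v.length := by
  rw [mu_eq_map, Measure.map_apply measurable_binaryDigits (measurableSet_cylinder v),
    Measure.restrict_apply' measurableSet_Ico]
  rcases (binaryDigits ⁻¹' cylinder v ∩ Set.Ico 0 1).eq_empty_or_nonempty with h | ⟨x₀, hx₀, hx₀I⟩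
  · simp [h]
  set k : ℤ := ⌊x₀ * 2 ^ v.length⌋
  have hsub : binaryDigits ⁻¹' cylinder v ∩ Set.Ico 0 1 ⊆
      (fun x => x * 2 ^ v.length) ⁻¹' Set.Ico (k : ℝ) (k + 1) := by
    rintro x ⟨hx, hxI⟩
    have hdig := (seg_eq_seg_iff _).1 (hx.trans hx₀.symm)
    have hk : ⌊x * 2 ^ v.length⌋ = k :=
      floor_mul_two_pow_eq hxI hx₀I _ fun i hi => by simpa using hdig i hi
    exact ⟨hk ▸ Int.floor_le _, hk ▸ Int.lt_floor_add_one _⟩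
  refine (measure_mono hsub).trans_eq ?_
  rw [Real.volume_preimage_mul_right (by positivity), Real.volume_Ico, add_sub_cancel_left,
    ENNReal.ofReal_one, mul_one, abs_of_pos (by positivity), ← inv_pow,
    ENNReal.ofReal_pow (by norm_num), ENNReal.ofReal_inv_of_pos (by norm_num)]
  simp

def words (n : ℕ) : Finset (List Bool) := Finset.univ.image (List.ofFn : (Fin n → Bool) → _)

lemma mem_words {v : List Bool} {n : ℕ} : v ∈ words n ↔ v.length = n := by
  refine ⟨fun h => ?_, fun h => ?_⟩
  · obtain ⟨σ, -, rfl⟩ := Finset.mem_image.1 h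
    exact List.length_ofFn
  · subst h
    exact Finset.mem_image.2 ⟨_, Finset.mem_univ _, List.ofFn_getElem⟩

lemma card_words (n : ℕ) : (words n).card = 2 ^ n := by
  rw [words, Finset.card_image_of_injective _ List.ofFn_injective]
  simp

lemma mu_le_card_mul {E : Set (ℕ → Bool)} {P : Finset (List Bool)} {n : ℕ} (hP : P ⊆ words n)
    (hE : E ⊆ ⋃ v ∈ P, cylinder v) : mu E ≤ P.card * 2⁻¹ ^ n :=
  calc mu E ≤ ∑ v ∈ P, mu (cylinder v) := (measure_mono hE).trans (measure_biUnion_finset_le _ _)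
    _ ≤ ∑ _v ∈ P, (2⁻¹ : ℝ≥0∞) ^ n := Finset.sum_le_sum fun v hv =>
        (mu_cylinder_le v).trans_eq (by rw [mem_words.1 (hP hv)])
    _ = P.card * 2⁻¹ ^ n := by rw [Finset.sum_const, nsmul_eq_mul]

lemma two_pow_sub_one_mul_inv_two_pow_lt_one (L : ℕ) :
    ((2 ^ L - 1 : ℕ) : ℝ≥0∞) * 2⁻¹ ^ L < 1 :=
  calc ((2 ^ L - 1 : ℕ) : ℝ≥0∞) * 2⁻¹ ^ L < ((2 ^ L : ℕ) : ℝ≥0∞) * 2⁻¹ ^ L := by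
        gcongr
        · simp
        · simp
        · exact_mod_cast Nat.sub_lt (Nat.two_pow_pos L) one_pos
    _ = 1 := by
        push_cast
        rw [← mul_pow, ENNReal.mul_inv_cancel two_ne_zero ENNReal.ofNat_ne_top, one_pow]

lemma mu_cylinder_ne_zero (v : List Bool) : mu (cylinder v) ≠ 0 := by
  intro h0
  have hcover : Set.univ ⊆ (⋃ v' ∈ (words v.length).erase v, cylinder v') ∪ cylinder v :=
    fun Y _ => by
      by_cases hY : seg Y 0 v.length = v
      · exact Or.inr hY
      · refine Or.inl (Set.mem_biUnion (Finset.mem_erase.2 ⟨hY, mem_words.2 (length_seg ..)⟩) ?_)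
        simp [cylinder]
  have : (1 : ℝ≥0∞) < 1 :=
    calc 1 = mu Set.univ := measure_univ.symm
      _ ≤ mu (⋃ v' ∈ (words v.length).erase v, cylinder v') + mu (cylinder v) :=
        (measure_mono hcover).trans (measure_union_le _ _)
      _ ≤ ((words v.length).erase v).card * 2⁻¹ ^ v.length + 0 :=
        add_le_add (mu_le_card_mul (Finset.erase_subset _ _) subset_rfl) h0.le
      _ = ((2 ^ v.length - 1 : ℕ) : ℝ≥0∞) * 2⁻¹ ^ v.length := by
        rw [Finset.card_erase_of_mem (mem_words.2 rfl), card_words, add_zero]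
      _ < 1 := two_pow_sub_one_mul_inv_two_pow_lt_one _
  exact lt_irrefl _ this

end Cylinders

section Avoidance

variable (N L : ℕ) (bad : List Bool → List Bool)

/-- The words of length `N + J * L` none of whose first `J` blocks of length `L` after position
`N` equals `bad` of the word preceding it. -/
def avoiders : ℕ → Finset (List Bool)
  | 0 => words N
  | J + 1 => (avoiders J).biUnion fun w => ((words L).erase (bad w)).image (w ++ ·)

lemma avoiders_subset_words : ∀ J, avoiders N L bad J ⊆ words (N + J * L)
  | 0 => by simp [avoiders]
  | J + 1 => fun v hv => by
    simp only [avoiders, Finset.mem_biUnion, Finset.mem_image, Finset.mem_erase] at hv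
    obtain ⟨w, hw, u, ⟨-, hu⟩, rfl⟩ := hv
    rw [mem_words] at hu ⊢
    rw [List.length_append, mem_words.1 (avoiders_subset_words J hw), hu]
    ring

lemma card_avoiders_le (hbad : ∀ w, (bad w).length = L) :
    ∀ J, (avoiders N L bad J).card ≤ 2 ^ N * (2 ^ L - 1) ^ J
  | 0 => by simp [avoiders, card_words]
  | J + 1 =>
    calc (avoiders N L bad (J + 1)).card
        ≤ ∑ w ∈ avoiders N L bad J, (((words L).erase (bad w)).image (w ++ ·)).card :=
          Finset.card_biUnion_le
      _ ≤ ∑ _w ∈ avoiders N L bad J, (2 ^ L - 1) := Finset.sum_le_sum fun w _ => by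
          refine Finset.card_image_le.trans_eq ?_
          rw [Finset.card_erase_of_mem (mem_words.2 (hbad w)), card_words]
      _ ≤ 2 ^ N * (2 ^ L - 1) ^ (J + 1) := by
          rw [Finset.sum_const, smul_eq_mul, pow_succ, ← mul_assoc]
          exact Nat.mul_le_mul_right _ (card_avoiders_le hbad J)

def avoidingSet : Set (ℕ → Bool) := {Y | ∀ j, seg Y (N + j * L) L ≠ bad (seg Y 0 (N + j * L))}

lemma seg_mem_avoiders {Y : ℕ → Bool} (hY : Y ∈ avoidingSet N L bad) :
    ∀ J, seg Y 0 (N + J * L) ∈ avoiders N L bad J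
  | 0 => by simp [avoiders, mem_words]
  | J + 1 => by
    rw [show N + (J + 1) * L = N + J * L + L by ring, seg_add, zero_add, avoiders]
    exact Finset.mem_biUnion.2 ⟨_, seg_mem_avoiders hY J, Finset.mem_image.2
      ⟨_, Finset.mem_erase.2 ⟨hY J, mem_words.2 (length_seg ..)⟩, rfl⟩⟩

theorem mu_avoidingSet_eq_zero (hbad : ∀ w, (bad w).length = L) :
    mu (avoidingSet N L bad) = 0 := by
  set r : ℝ≥0∞ := ((2 ^ L - 1 : ℕ) : ℝ≥0∞) * 2⁻¹ ^ L
  refine le_antisymm (ge_of_tendsto' (ENNReal.tendsto_pow_atTop_nhds_zero_of_lt_one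
    (two_pow_sub_one_mul_inv_two_pow_lt_one L)) fun J => ?_) bot_le
  have hcover : avoidingSet N L bad ⊆ ⋃ v ∈ avoiders N L bad J, cylinder v := fun Y hY =>
    Set.mem_biUnion (seg_mem_avoiders N L bad hY J) (by simp [cylinder])
  calc mu (avoidingSet N L bad)
      ≤ (avoiders N L bad J).card * 2⁻¹ ^ (N + J * L) :=
        mu_le_card_mul (avoiders_subset_words N L bad J) hcover
    _ ≤ ((2 ^ N * (2 ^ L - 1) ^ J : ℕ) : ℝ≥0∞) * 2⁻¹ ^ (N + J * L) := by
        gcongr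
        exact_mod_cast card_avoiders_le N L bad hbad J
    _ = (2 ^ N * 2⁻¹ ^ N) * r ^ J := by
        rw [pow_add, mul_comm J L, pow_mul, Nat.cast_mul, Nat.cast_pow, Nat.cast_pow, mul_pow]
        norm_num
        ring
    _ = r ^ J := by
        rw [← mul_pow, ENNReal.mul_inv_cancel two_ne_zero ENNReal.ofNat_ne_top, one_pow, one_mul]

end Avoidance

/-- In consecutive blocks of length `L`, the run would have to avoid the escape word of the
state it has reached. -/
theorem mu_eventually_run_mem_eq_zero {S : Type*} [Finite S] (f : S → Bool → S) (s₀ : S)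
    {D : Set S} (hD : ∀ u ∈ D, ∃ z, act f u z ∉ D) :
    mu {Y | ∀ᶠ n in atTop, run f s₀ Y n ∈ D} = 0 := by
  choose! z hz using hD
  obtain ⟨L, hL⟩ := Finite.exists_le fun u => (z u).length
  let bad (w : List Bool) : List Bool := (z (act f s₀ w)).rightpad L false
  have hbad (w : List Bool) : (bad w).length = L := by simp [bad, hL]
  refine measure_mono_null (fun Y hY => ?_)
    (measure_iUnion_null fun N => mu_avoidingSet_eq_zero N L bad hbad)
  obtain ⟨N, hN⟩ := eventually_atTop.1 hY
  refine Set.mem_iUnion.2 ⟨N, fun j hj => ?_⟩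
  set M := N + j * L
  have hu : run f s₀ Y M ∈ D := hN M (by omega)
  have hprefix : z (run f s₀ Y M) <+: seg Y M L := by
    rw [hj, run_eq_act_seg]
    exact List.prefix_append _ _
  have hout := hz _ hu
  rw [← seg_eq_of_prefix Y hprefix, ← run_add] at hout
  exact hout (hN _ (by omega))

theorem mu_muller_ne_zero_of_disjunctive {S : Type*} [Finite S] (f : S → Bool → S) (s₀ : S)
    (𝔉 : Set (Set S)) {X : ℕ → Bool} (hX : Disjunctive X) (hXF : InfOcc f s₀ X ∈ 𝔉) :
    mu {Y | InfOcc f s₀ Y ∈ 𝔉} ≠ 0 := by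
  set C := InfOcc f s₀ X
  have hclosed := infOcc_closed_of_disjunctive f s₀ X hX
  obtain ⟨n₁, hn₁⟩ := (eventually_mem_infOcc f s₀ X).exists
  have hcover : cylinder (seg X 0 n₁) ⊆
      {Y | InfOcc f s₀ Y ∈ 𝔉} ∪ ⋃ c ∈ C, {Y | ∀ᶠ n in atTop, run f s₀ Y n ∈ C \ {c}} := by
    intro Y hY
    have hstart : run f s₀ Y n₁ = run f s₀ X n₁ := by
      have hseg : seg Y 0 n₁ = seg X 0 n₁ := by simpa [cylinder] using hY
      rw [run_eq_act_seg, run_eq_act_seg, hseg]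
    have hC : ∀ᶠ n in atTop, run f s₀ Y n ∈ C :=
      eventually_atTop.2 ⟨n₁, fun n hn => run_mem_of_le f s₀ Y hclosed (hstart ▸ hn₁) hn⟩
    by_cases hYF : InfOcc f s₀ Y ∈ 𝔉
    · exact Or.inl hYF
    obtain ⟨c, hc, hcY⟩ : ∃ c ∈ C, c ∉ InfOcc f s₀ Y := Set.not_subset.1 fun h =>
      hYF ((infOcc_subset_of_eventually f s₀ Y hC).antisymm h ▸ hXF)
    refine Or.inr (Set.mem_biUnion hc ?_)
    filter_upwards [hC, not_frequently.1 hcY] with n hn hnc using ⟨hn, hnc⟩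
  have hnull : mu (⋃ c ∈ C, {Y | ∀ᶠ n in atTop, run f s₀ Y n ∈ C \ {c}}) = 0 :=
    measure_biUnion_null_iff (Set.to_countable C) |>.2 fun c hc =>
      mu_eventually_run_mem_eq_zero f s₀ fun u hu => by
        obtain ⟨z, hz⟩ := reach_of_mem_infOcc f s₀ X hu.1 hc
        exact ⟨z, by simp [hz]⟩
  intro h0
  apply mu_cylinder_ne_zero (seg X 0 n₁)
  exact measure_mono_null hcover (measure_union_null h0 hnull)

/-- The state of this machine is the last `m` letters read. -/
def shiftWindow (m : ℕ) (v : List.Vector Bool m) (b : Bool) : List.Vector Bool m :=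
  ⟨(v.toList ++ [b]).drop 1, by simp⟩

lemma toList_act_shiftWindow {m : ℕ} (v : List.Vector Bool m) (u : List Bool) :
    (act (shiftWindow m) v u).toList = (v.toList ++ u).drop u.length := by
  induction u generalizing v with
  | nil => simp [act]
  | cons b u ih =>
    rw [show act (shiftWindow m) v (b :: u) = act (shiftWindow m) (shiftWindow m v b) u from rfl,
      ih, shiftWindow, List.Vector.toList_mk,
      ← List.drop_append_of_le_length (l₂ := u) (by simp : 1 ≤ (v.toList ++ [b]).length),
      List.drop_drop]
    simp [Nat.add_comm]

lemma act_shiftWindow_of_length_eq {m : ℕ} (v : List.Vector Bool m) {w : List Bool}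
    (hw : w.length = m) : act (shiftWindow m) v w = ⟨w, hw⟩ :=
  List.Vector.toList_injective <| by
    rw [toList_act_shiftWindow, List.drop_left' (by rw [v.toList_length, hw])]; rfl

theorem exists_muller_null_of_not_occurs {X : ℕ → Bool} {w : List Bool} (hw : ¬ Occurs w X) :
    ∃ (S : Type) (_ : Fintype S) (f : S → Bool → S) (s₀ : S) (𝔉 : Set (Set S)),
      mu {Y : ℕ → Bool | InfOcc f s₀ Y ∈ 𝔉} = 0 ∧ InfOcc f s₀ X ∈ 𝔉 := by
  let f := shiftWindow w.length
  let s₀ : List.Vector Bool w.length := ⟨w, rfl⟩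
  have hwX : (⟨w, rfl⟩ : List.Vector Bool w.length) ∉ InfOcc f s₀ X := fun h => by
    obtain ⟨n, hn, hrun⟩ := frequently_atTop.1 h w.length
    apply hw
    rw [occurs_iff_exists_seg_eq]
    refine ⟨n - w.length, ?_⟩
    have := congrArg List.Vector.toList hrun
    rwa [← Nat.sub_add_cancel hn, run_add, toList_act_shiftWindow,
      List.drop_left' (by simp)] at this
  refine ⟨_, inferInstance, f, s₀, {InfOcc f s₀ X}, measure_mono_null (fun Y hY => ?_)
    (mu_eventually_run_mem_eq_zero f s₀ (D := InfOcc f s₀ X) fun u _ => ⟨w, ?_⟩), rfl⟩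
  · exact (hY : InfOcc f s₀ Y = _) ▸ eventually_mem_infOcc f s₀ Y
  · rwa [act_shiftWindow_of_length_eq u rfl]

end Muller

/-- `X` is accepted by some deterministic Muller automaton of measure zero
iff `X` is not disjunctive. -/
theorem stmt9 (X : ℕ → Bool) :
    (∃ (S : Type) (_ : Fintype S) (f : S → Bool → S) (s₀ : S) (𝔉 : Set (Set S)),
        mu {Y : ℕ → Bool | InfOcc f s₀ Y ∈ 𝔉} = 0 ∧ InfOcc f s₀ X ∈ 𝔉) ↔
      ¬ Disjunctive X := by
  constructor
  · rintro ⟨S, _, f, s₀, 𝔉, hnull, hXF⟩ hX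
    exact Muller.mu_muller_ne_zero_of_disjunctive f s₀ 𝔉 hX hXF hnull
  · intro hX
    obtain ⟨w, hw⟩ := not_forall.1 hX
    exact Muller.exists_muller_null_of_not_occurs hw
end

section
/- For every automatic randomness test (I, U), there exists a deterministic Büchi automaton M over Bool (on some finite state type) such that μ(L(M)) = 0 and L(M) equals the covering region F(I, U). -/
open MeasureTheory Filter

/-!
The covering region lies in sets `[U i]` of arbitrarily small measure, so it is null. For the
automaton: `X` lies in the covering region iff every index word `i ∈ I` has a prefix `x` of `X`
with `conv x i` in the convolution language `L`. Prefixes shorter than `i` are settled once `i`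
has been read; if none works, `i` leaves an *obligation*, the state of the DFA for `L` after
`conv (X↾|i|) i`, which from then on reads only the padded letters `(X m, none)` and has to reach
an accepting state. A subset construction over all index words of the current length yields the
new obligations at each time, and the breakpoint construction of Miyano and Hayashi turns "every
obligation is eventually discharged" into a Büchi condition on a finite state space.
-/

section Words

def seqTake {α : Type*} (X : ℕ → α) (n : ℕ) : List α := (List.range n).map X

variable {α : Type*} (X : ℕ → α)

@[simp] lemma length_seqTake (n : ℕ) : (seqTake X n).length = n := by simp [seqTake]

lemma seqTake_succ (n : ℕ) : seqTake X (n + 1) = seqTake X n ++ [X n] := by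
  simp [seqTake, List.range_succ]

lemma getElem_seqTake {n k : ℕ} (hk : k < (seqTake X n).length) : (seqTake X n)[k] = X k := by
  simp [seqTake]

end Words

lemma isPrefixOfSeq_seqTake (X : ℕ → Bool) (n : ℕ) : IsPrefixOfSeq (seqTake X n) X := by
  intro k hk
  rw [List.getD_eq_getElem _ _ hk, getElem_seqTake]

lemma isPrefixOfSeq_iff {w : List Bool} {X : ℕ → Bool} :
    IsPrefixOfSeq w X ↔ w = seqTake X w.length := by
  constructor
  · intro h
    refine List.ext_getElem (by simp) fun k hk _ => ?_
    rw [getElem_seqTake, h k hk, List.getD_eq_getElem _ _ hk]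
  · intro h
    rw [h]
    exact isPrefixOfSeq_seqTake X _

lemma mem_cyl_iff {L : Set (List Bool)} {X : ℕ → Bool} :
    X ∈ cyl L ↔ ∃ n, seqTake X n ∈ L := by
  constructor
  · rintro ⟨w, hw, hX⟩
    exact ⟨w.length, isPrefixOfSeq_iff.1 hX ▸ hw⟩
  · rintro ⟨n, hn⟩
    exact ⟨_, hn, isPrefixOfSeq_seqTake X n⟩

lemma bind_fst_getElem?_conv (x i : List Bool) (k : ℕ) :
    ((conv x i)[k]?).bind Prod.fst = x[k]? := by
  by_cases hk : k < max x.length i.length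
  · simp [conv, hk]
  · rw [List.getElem?_eq_none (by simp [conv]; omega), List.getElem?_eq_none (by omega)]
    rfl

lemma bind_snd_getElem?_conv (x i : List Bool) (k : ℕ) :
    ((conv x i)[k]?).bind Prod.snd = i[k]? := by
  by_cases hk : k < max x.length i.length
  · simp [conv, hk]
  · rw [List.getElem?_eq_none (by simp [conv]; omega), List.getElem?_eq_none (by omega)]
    rfl

lemma conv_injective2 : Function.Injective2 conv := fun x x' i i' h =>
  ⟨List.ext_getElem? fun k => by rw [← bind_fst_getElem?_conv x i, h, bind_fst_getElem?_conv],
    List.ext_getElem? fun k => by rw [← bind_snd_getElem?_conv x i, h, bind_snd_getElem?_conv]⟩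

lemma conv_eq_conv_append {x i x' i' : List Bool}
    (hlen : max x'.length i'.length = max x.length i.length + 1)
    (hx : ∀ k < max x.length i.length, x'[k]? = x[k]?)
    (hi : ∀ k < max x.length i.length, i'[k]? = i[k]?) :
    conv x' i' = conv x i ++ [(x'[max x.length i.length]?, i'[max x.length i.length]?)] := by
  simp only [conv, hlen, List.range_succ, List.map_append, List.map_singleton]
  congr 1
  exact List.map_congr_left fun k hk => by
    rw [hx k (List.mem_range.1 hk), hi k (List.mem_range.1 hk)]

lemma conv_append_singleton_left {x i : List Bool} (b : Bool) (h : i.length ≤ x.length) :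
    conv (x ++ [b]) i = conv x i ++ [(some b, none)] := by
  rw [conv_eq_conv_append (x := x) (i := i) (by simp; omega) (fun k hk => ?_) (fun _ _ => rfl)]
  · simp [h]
  · simp [List.getElem?_append_left (lt_of_lt_of_le hk (max_le le_rfl h))]

lemma conv_append_singleton_right {x i : List Bool} (c : Bool) (h : x.length ≤ i.length) :
    conv x (i ++ [c]) = conv x i ++ [(none, some c)] := by
  rw [conv_eq_conv_append (x := x) (i := i) (by simp; omega) (fun _ _ => rfl) (fun k hk => ?_)]
  · simp [h]
  · simp [List.getElem?_append_left (lt_of_lt_of_le hk (max_le h le_rfl))]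

lemma conv_append_singleton {x i : List Bool} (b c : Bool) (h : x.length = i.length) :
    conv (x ++ [b]) (i ++ [c]) = conv x i ++ [(some b, some c)] := by
  rw [conv_eq_conv_append (x := x) (i := i) (by simp [h]) (fun k hk => ?_) (fun k hk => ?_)]
  · simp [h]
  · rw [h, max_self] at hk
    simp [List.getElem?_append_left (h ▸ hk)]
  · rw [h, max_self] at hk
    simp [List.getElem?_append_left hk]

namespace Breakpoint

variable {Q : Type*} (G : Set Q) (g : ℕ → Q → Q) (T : ℕ → Set Q)

def orbit (n : ℕ) (q : Q) : ℕ → Q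
  | 0 => q
  | j + 1 => g (n + j) (orbit n q j)

open scoped Classical in
/-- The first component holds all live obligations, the second a batch of them being waited on;
a breakpoint occurs when the whole batch has been discharged, and the batch is then refilled. -/
noncomputable def breakpointStep (h : Q → Q) (T' : Set Q) (s : Set Q × Set Q) : Set Q × Set Q :=
  ((h '' s.1 ∪ T') \ G, if h '' s.2 \ G = ∅ then (h '' s.1 ∪ T') \ G else h '' s.2 \ G)

noncomputable def breakpointSeq : ℕ → Set Q × Set Q
  | 0 => (T 0 \ G, T 0 \ G)
  | n + 1 => breakpointStep G (g n) (T (n + 1)) (breakpointSeq n)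

noncomputable def alive (n : ℕ) : Set Q := (breakpointSeq G g T n).1

noncomputable def pending (n : ℕ) : Set Q := (breakpointSeq G g T n).2

def IsBreakpoint : ℕ → Prop
  | 0 => True
  | n + 1 => g n '' pending G g T n \ G = ∅

def AllDischarged : Prop := ∀ n, ∀ q ∈ T n, ∃ j, orbit g n q j ∈ G

variable {G g T}

lemma orbit_add (n : ℕ) (q : Q) (j k : ℕ) :
    orbit g n q (j + k) = orbit g (n + j) (orbit g n q j) k := by
  induction k with
  | zero => rfl
  | succ k ih => rw [← Nat.add_assoc, orbit, ih, orbit, Nat.add_assoc]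

lemma alive_succ (n : ℕ) : alive G g T (n + 1) = (g n '' alive G g T n ∪ T (n + 1)) \ G := rfl

lemma pending_succ_of_isBreakpoint {n : ℕ} (h : IsBreakpoint G g T (n + 1)) :
    pending G g T (n + 1) = alive G g T (n + 1) := if_pos h

lemma pending_succ_of_not_isBreakpoint {n : ℕ} (h : ¬IsBreakpoint G g T (n + 1)) :
    pending G g T (n + 1) = g n '' pending G g T n \ G := if_neg h

lemma pending_eq_alive_of_isBreakpoint {n : ℕ} (h : IsBreakpoint G g T n) :
    pending G g T n = alive G g T n := by
  cases n with
  | zero => rfl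
  | succ n => exact pending_succ_of_isBreakpoint h

lemma pending_subset_alive (n : ℕ) : pending G g T n ⊆ alive G g T n := by
  induction n with
  | zero => rfl
  | succ n ih =>
    by_cases h : IsBreakpoint G g T (n + 1)
    · rw [pending_succ_of_isBreakpoint h]
    · rw [pending_succ_of_not_isBreakpoint h, alive_succ]
      exact Set.sdiff_subset_sdiff_left ((Set.image_mono ih).trans Set.subset_union_left)

lemma notMem_of_mem_alive {n : ℕ} {q : Q} (hq : q ∈ alive G g T n) : q ∉ G := by
  cases n with
  | zero => exact hq.2
  | succ n => exact hq.2

lemma mem_alive_of_mem {n : ℕ} {q : Q} (hq : q ∈ T n) (hG : q ∉ G) : q ∈ alive G g T n := by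
  cases n with
  | zero => exact ⟨hq, hG⟩
  | succ n => exact ⟨Or.inr hq, hG⟩

lemma orbit_mem_alive {n : ℕ} {q : Q} (hq : q ∈ alive G g T n)
    (hG : ∀ j, orbit g n q j ∉ G) :
    ∀ j, orbit g n q j ∈ alive G g T (n + j)
  | 0 => hq
  | j + 1 => ⟨Or.inl ⟨_, orbit_mem_alive hq hG j, rfl⟩, hG (j + 1)⟩

lemma not_isBreakpoint_succ {n : ℕ} {q : Q} (hq : q ∈ pending G g T n) (hG : g n q ∉ G) :
    ¬IsBreakpoint G g T (n + 1) :=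
  fun h => Set.eq_empty_iff_forall_notMem.1 h _ ⟨⟨q, hq, rfl⟩, hG⟩

lemma orbit_mem_pending {n : ℕ} {q : Q} (hq : q ∈ pending G g T n)
    (hG : ∀ j, orbit g n q j ∉ G) :
    ∀ j, orbit g n q j ∈ pending G g T (n + j)
  | 0 => hq
  | j + 1 => by
    have ih := orbit_mem_pending hq hG j
    rw [← Nat.add_assoc, pending_succ_of_not_isBreakpoint (not_isBreakpoint_succ ih (hG (j + 1)))]
    exact ⟨⟨_, ih, rfl⟩, hG (j + 1)⟩

lemma allDischarged_of_frequently_isBreakpoint (h : ∃ᶠ n in atTop, IsBreakpoint G g T n) :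
    AllDischarged G g T := by
  -- An obligation that is never discharged stays alive; from the next breakpoint on it stays
  -- pending, which rules out every later breakpoint.
  intro n q hq
  by_contra! hG
  have halive := orbit_mem_alive (mem_alive_of_mem hq (hG 0)) hG
  obtain ⟨_, hj, hbreak⟩ := frequently_atTop.1 h n
  obtain ⟨j, rfl⟩ := Nat.exists_eq_add_of_le hj
  have hpending := orbit_mem_pending (n := n + j) (q := orbit g n q j)
    (pending_eq_alive_of_isBreakpoint hbreak ▸ halive j) (fun k => orbit_add n q j k ▸ hG _)
  obtain ⟨_, hk, hbreak'⟩ := frequently_atTop.1 h (n + j + 1)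
  obtain ⟨k, rfl⟩ := Nat.exists_eq_add_of_le hk
  rw [Nat.add_right_comm] at hbreak'
  have hG' : orbit g (n + j) (orbit g n q j) (k + 1) ∉ G := orbit_add n q j (k + 1) ▸ hG _
  exact not_isBreakpoint_succ (hpending k) hG' hbreak'

lemma exists_orbit_mem_of_mem_alive (hT : AllDischarged G g T) :
    ∀ n, ∀ q ∈ alive G g T n, ∃ j, orbit g n q j ∈ G
  | 0, q, hq => hT 0 q hq.1
  | n + 1, q, ⟨Or.inr hq, _⟩ => hT (n + 1) q hq
  | n + 1, _, ⟨Or.inl ⟨q, hq, rfl⟩, _⟩ => by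
    obtain ⟨_ | j, hj⟩ := exists_orbit_mem_of_mem_alive hT n q hq
    · exact absurd hj (notMem_of_mem_alive hq)
    · exact ⟨j, by rwa [Nat.add_comm, orbit_add] at hj⟩

lemma exists_orbit_of_mem_pending {n j : ℕ} {y : Q}
    (h : ∀ k < j, ¬IsBreakpoint G g T (n + k + 1))
    (hy : y ∈ pending G g T (n + j)) :
    ∃ q ∈ pending G g T n, orbit g n q j = y ∧ ∀ k ≤ j, orbit g n q k ∉ G := by
  induction j generalizing y with
  | zero =>
    refine ⟨y, hy, rfl, fun k hk => ?_⟩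
    rw [Nat.le_zero.1 hk]
    exact notMem_of_mem_alive (pending_subset_alive _ hy)
  | succ j ih =>
    rw [← Nat.add_assoc, pending_succ_of_not_isBreakpoint (h j j.lt_succ_self)] at hy
    obtain ⟨⟨y, hy', rfl⟩, hG⟩ := hy
    obtain ⟨q, hq, rfl, hqG⟩ := ih (fun k hk => h k (hk.trans j.lt_succ_self)) hy'
    refine ⟨q, hq, rfl, fun k hk => ?_⟩
    rcases hk.lt_or_eq with hk | rfl
    · exact hqG k (Nat.lt_succ_iff.1 hk)
    · exact hG

lemma frequently_isBreakpoint_of_allDischarged [Finite Q] (hT : AllDischarged G g T) :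
    ∃ᶠ n in atTop, IsBreakpoint G g T n := by
  refine frequently_atTop.2 fun a => ?_
  -- Without breakpoints after `a`, some state pending at `a` would avoid `G` for longer than the
  -- time `J` within which every state pending at `a` is discharged.
  by_contra! h
  obtain ⟨J, hJ⟩ : ∃ J, ∀ q ∈ pending G g T a, ∃ j ≤ J, orbit g a q j ∈ G := by
    refine (eventually_all.2 fun q => ?_).exists (f := atTop)
    by_cases hq : q ∈ pending G g T a
    · obtain ⟨j, hj⟩ := exists_orbit_mem_of_mem_alive hT a q (pending_subset_alive a hq)
      exact (eventually_ge_atTop j).mono fun J hJ _ => ⟨j, hJ, hj⟩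
    · exact Eventually.of_forall fun _ h => absurd h hq
  obtain ⟨_, ⟨y, hy, -⟩, -⟩ := Set.nonempty_iff_ne_empty.2 (h (a + J + 1) (by omega))
  obtain ⟨q, hq, -, hG⟩ := exists_orbit_of_mem_pending (fun k _ => h _ (by omega)) hy
  obtain ⟨j, hjJ, hj⟩ := hJ q hq
  exact hG j hjJ hj

theorem frequently_isBreakpoint_iff [Finite Q] :
    (∃ᶠ n in atTop, IsBreakpoint G g T n) ↔ AllDischarged G g T :=
  ⟨allDischarged_of_frequently_isBreakpoint, frequently_isBreakpoint_of_allDischarged⟩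

end Breakpoint

namespace CoverAutomaton

open Breakpoint

variable {P Q : Type*} (MI : DFA Bool P) (MU : DFA (Option Bool × Option Bool) Q)

def indexStep (W : Set (P × Q × Set Q)) (b : Bool) : Set (P × Q × Set Q) :=
  {y | ∃ p q R c, (p, q, R) ∈ W ∧
    y = (MI.step p c, MU.step q (some b, some c), (MU.step · (none, some c)) '' insert q R)}

def indexRun (X : ℕ → Bool) : ℕ → Set (P × Q × Set Q) :=
  run (indexStep MI MU) {(MI.start, MU.start, ∅)} X

/-- The last component decides whether a prefix of `X` shorter than `i` is already good for `i`;
this is only known once `i` is complete, so the run of every such prefix is carried along. -/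
def indexTriple (X : ℕ → Bool) (n : ℕ) (i : List Bool) : P × Q × Set Q :=
  (MI.eval i, MU.eval (conv (seqTake X n) i),
    (fun m => MU.eval (conv (seqTake X m) i)) '' Set.Iio n)

def obligations (W : Set (P × Q × Set Q)) : Set Q :=
  {q | ∃ p R, (p, q, R) ∈ W ∧ p ∈ MI.accept ∧ Disjoint R MU.accept}

def padStep (X : ℕ → Bool) (m : ℕ) (q : Q) : Q := MU.step q (some (X m), none)

variable {MI MU}

lemma indexTriple_append {X : ℕ → Bool} {n : ℕ} {i : List Bool} (hi : i.length = n)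
    (c : Bool) :
    indexTriple MI MU X (n + 1) (i ++ [c]) =
      (MI.step (MI.eval i) c, MU.step (MU.eval (conv (seqTake X n) i)) (some (X n), some c),
        (MU.step · (none, some c)) ''
          insert (MU.eval (conv (seqTake X n) i)) ((indexTriple MI MU X n i).2.2)) := by
  have hpad : ∀ m ≤ n,
      conv (seqTake X m) (i ++ [c]) = conv (seqTake X m) i ++ [(none, some c)] :=
    fun m hm => conv_append_singleton_right c (by simp [hi, hm])
  simp only [indexTriple, DFA.eval_append_singleton, seqTake_succ,
    conv_append_singleton _ _ (by simp [hi] : (seqTake X n).length = i.length)]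
  congr
  ext q
  simp only [Set.mem_image, Set.mem_Iio, Set.mem_insert_iff]
  constructor
  · rintro ⟨m, hm, rfl⟩
    rw [hpad m (Nat.lt_succ_iff.1 hm), DFA.eval_append_singleton]
    rcases (Nat.lt_succ_iff.1 hm).eq_or_lt with rfl | hm
    · exact ⟨_, Or.inl rfl, rfl⟩
    · exact ⟨_, Or.inr ⟨m, hm, rfl⟩, rfl⟩
  · rintro ⟨_, rfl | ⟨m, hm, rfl⟩, rfl⟩
    · exact ⟨n, n.lt_succ_self, by rw [hpad n le_rfl, DFA.eval_append_singleton]⟩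
    · exact ⟨m, hm.trans n.lt_succ_self, by rw [hpad m hm.le, DFA.eval_append_singleton]⟩

lemma indexRun_eq (X : ℕ → Bool) (n : ℕ) :
    indexRun MI MU X n = indexTriple MI MU X n '' {i | i.length = n} := by
  induction n with
  | zero =>
    simp [indexRun, run, indexTriple, conv]
  | succ n ih =>
    ext y
    simp only [indexRun, run] at ih ⊢
    rw [indexStep, ih]
    constructor
    · rintro ⟨p, q, R, c, ⟨i, (hi : i.length = n), hiy⟩, rfl⟩
      refine ⟨i ++ [c], by simp [hi], ?_⟩
      rw [indexTriple_append hi]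
      simp only [indexTriple, Prod.ext_iff] at hiy ⊢
      obtain ⟨rfl, rfl, rfl⟩ := hiy
      simp
    · rintro ⟨i', hi', rfl⟩
      obtain ⟨i, c, rfl⟩ : ∃ i c, i' = i ++ [c] :=
        (i'.eq_nil_or_concat').resolve_left (by rintro rfl; simp at hi')
      have hi : i.length = n := by simpa using hi'
      exact ⟨_, _, _, c, ⟨i, hi, rfl⟩, indexTriple_append hi c⟩

lemma mem_obligations_indexRun {X : ℕ → Bool} {n : ℕ} {q : Q} :
    q ∈ obligations MI MU (indexRun MI MU X n) ↔
      ∃ i ∈ MI.accepts, i.length = n ∧ (∀ m < n, conv (seqTake X m) i ∉ MU.accepts) ∧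
        MU.eval (conv (seqTake X n) i) = q := by
  simp only [obligations, indexRun_eq, indexTriple, Set.mem_image, Set.mem_ofPred_eq, Prod.ext_iff,
    Set.disjoint_left, DFA.mem_accepts]
  constructor
  · rintro ⟨_, _, ⟨i, hi, rfl, rfl, rfl⟩, hacc, hR⟩
    exact ⟨i, hacc, hi, fun m hm => hR ⟨m, hm, rfl⟩, rfl⟩
  · rintro ⟨i, hacc, hi, hR, rfl⟩
    exact ⟨_, _, ⟨i, hi, rfl, rfl, rfl⟩, hacc, by rintro _ ⟨m, hm, rfl⟩; exact hR m hm⟩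

lemma orbit_padStep {X : ℕ → Bool} {n : ℕ} {i : List Bool} (hi : i.length ≤ n) (j : ℕ) :
    orbit (padStep MU X) n (MU.eval (conv (seqTake X n) i)) j =
      MU.eval (conv (seqTake X (n + j)) i) := by
  induction j with
  | zero => rfl
  | succ j ih =>
    rw [orbit, ih, ← Nat.add_assoc, seqTake_succ, conv_append_singleton_left _ (by simp; omega),
      DFA.eval_append_singleton]
    rfl

theorem allDischarged_iff (X : ℕ → Bool) :
    AllDischarged MU.accept (padStep MU X) (obligations MI MU ∘ indexRun MI MU X) ↔
      ∀ i ∈ MI.accepts, ∃ m, conv (seqTake X m) i ∈ MU.accepts := by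
  constructor
  · intro h i hi
    by_contra! hnone
    obtain ⟨j, hj⟩ :=
      h i.length _ (mem_obligations_indexRun.2 ⟨i, hi, rfl, fun m _ => hnone m, rfl⟩)
    rw [orbit_padStep le_rfl] at hj
    exact hnone _ hj
  · rintro h n _ hq
    obtain ⟨i, hi, rfl, hnone, rfl⟩ := mem_obligations_indexRun.1 hq
    obtain ⟨m, hm⟩ := h i hi
    obtain ⟨j, rfl⟩ := Nat.exists_eq_add_of_le (not_lt.1 fun hlt => hnone m hlt hm)
    exact ⟨j, by rwa [orbit_padStep le_rfl]⟩

abbrev BuchiState (P Q : Type*) := Set (P × Q × Set Q) × (Set Q × Set Q) × Prop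

variable (MI MU)

noncomputable def buchiStep (s : BuchiState P Q) (b : Bool) : BuchiState P Q :=
  (indexStep MI MU s.1 b,
    breakpointStep MU.accept (MU.step · (some b, none))
      (obligations MI MU (indexStep MI MU s.1 b)) s.2.1,
    (MU.step · (some b, none)) '' s.2.1.2 \ MU.accept = ∅)

def buchiStart : BuchiState P Q :=
  ({(MI.start, MU.start, ∅)},
    (obligations MI MU {(MI.start, MU.start, ∅)} \ MU.accept,
      obligations MI MU {(MI.start, MU.start, ∅)} \ MU.accept),
    True)

lemma run_buchiStep (X : ℕ → Bool) (n : ℕ) :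
    run (buchiStep MI MU) (buchiStart MI MU) X n =
      (indexRun MI MU X n,
        breakpointSeq MU.accept (padStep MU X) (obligations MI MU ∘ indexRun MI MU X) n,
        IsBreakpoint MU.accept (padStep MU X) (obligations MI MU ∘ indexRun MI MU X) n) := by
  induction n with
  | zero => rfl
  | succ n ih => rw [run, ih]; rfl

theorem buchiAccepts_iff [Finite Q] (X : ℕ → Bool) :
    BuchiAccepts (buchiStep MI MU) (buchiStart MI MU) {s | s.2.2} X ↔
      ∀ i ∈ MI.accepts, ∃ m, conv (seqTake X m) i ∈ MU.accepts := by
  simp only [BuchiAccepts, run_buchiStep]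
  exact frequently_isBreakpoint_iff.trans (allDischarged_iff X)

end CoverAutomaton

open CoverAutomaton

lemma conv_mem_iff {I : Set (List Bool)} {U : List Bool → Set (List Bool)} {i x : List Bool}
    (hi : i ∈ I) : conv x i ∈ {c | ∃ i ∈ I, ∃ x ∈ U i, c = conv x i} ↔ x ∈ U i := by
  constructor
  · rintro ⟨i', -, x', hx', h⟩
    obtain ⟨rfl, rfl⟩ := conv_injective2 h
    exact hx'
  · exact fun hx => ⟨i, hi, x, hx, rfl⟩

lemma mem_coverRegion_iff {P Q : Type*} {MI : DFA Bool P} {MU : DFA (Option Bool × Option Bool) Q}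
    {U : List Bool → Set (List Bool)}
    (hU : MU.accepts = {c | ∃ i ∈ MI.accepts, ∃ x ∈ U i, c = conv x i}) (X : ℕ → Bool) :
    X ∈ coverRegion MI.accepts U ↔
      ∀ i ∈ MI.accepts, ∃ m, conv (seqTake X m) i ∈ MU.accepts := by
  simp only [coverRegion, Set.mem_iInter₂, mem_cyl_iff, hU]
  exact forall₂_congr fun i hi => exists_congr fun m => (conv_mem_iff hi).symm

lemma measure_biInter_eq_zero {Ω ι : Type*} [MeasurableSpace Ω] (μ : Measure Ω) {I : Set ι}
    {s : ι → Set Ω} (h : ∀ ε : ENNReal, 0 < ε → ∃ i ∈ I, μ (s i) ≤ ε) :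
    μ (⋂ i ∈ I, s i) = 0 := by
  refine nonpos_iff_eq_zero.1 (le_of_forall_gt_imp_ge_of_dense fun ε hε => ?_)
  obtain ⟨i, hi, hμ⟩ := h ε hε
  exact (measure_mono (Set.biInter_subset_of_mem hi)).trans hμ

/-- The covering region of every ART is the language of some
deterministic Büchi automaton of measure zero. -/
theorem stmt10 (I : Set (List Bool)) (U : List Bool → Set (List Bool)) (h : IsART I U) :
    ∃ (S : Type) (_ : Fintype S) (f : S → Bool → S) (s₀ : S) (F : Set S),
      mu {Y : ℕ → Bool | BuchiAccepts f s₀ F Y} = 0 ∧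
      {Y : ℕ → Bool | BuchiAccepts f s₀ F Y} = coverRegion I U := by
  obtain ⟨⟨⟨P, _, fI, a₀, FI, rfl⟩, ⟨Q, _, fU, q₀, FU, hU⟩⟩, hsmall⟩ := h
  let MI : DFA Bool P := ⟨fI, a₀, FI⟩
  let MU : DFA (Option Bool × Option Bool) Q := ⟨fU, q₀, FU⟩
  have hcover : {Y | BuchiAccepts (buchiStep MI MU) (buchiStart MI MU) {s | s.2.2} Y} =
      coverRegion MI.accepts U := by
    ext X
    exact (buchiAccepts_iff MI MU X).trans
      (mem_coverRegion_iff (MI := MI) (MU := MU) hU.symm X).symm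
  refine ⟨BuchiState P Q, Fintype.ofFinite _, buchiStep MI MU, buchiStart MI MU, {s | s.2.2},
    ?_, hcover⟩
  rw [hcover]
  exact measure_biInter_eq_zero mu hsmall
end
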